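/- Let X be a compact metric space with at least two points and no isolated points, and F a finite family of homeomorphisms of X. If IFS(F) is S-transitive but not forward minimal, then IFS(F) is sensitive. -/
import Mathlib


open Metric Set

variable {X : Type*} [MetricSpace X]

/-- The semigroup generated by `F`: all finite (nonempty) compositions. -/
def SemigroupGen (F : Set (X ≃ₜ X)) : Set (X ≃ₜ X) :=
  {h | ∃ l : List (X ≃ₜ X), l ≠ [] ∧ (∀ f ∈ l, f ∈ F) ∧
    h = l.foldr Homeomorph.trans (Homeomorph.refl X)}

def ForwardOrbit (F : Set (X ≃ₜ X)) (x : X) : Set X :=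
  {y | ∃ h ∈ SemigroupGen F, y = h x}

def BackwardOrbit (F : Set (X ≃ₜ X)) (x : X) : Set X :=
  {y | ∃ h ∈ SemigroupGen F, y = h.symm x}

def ForwardMinimal (F : Set (X ≃ₜ X)) : Prop := ∀ x : X, Dense (ForwardOrbit F x)

def StronglyTransitive (F : Set (X ≃ₜ X)) : Prop := ∀ x : X, Dense (BackwardOrbit F x)

def Sensitive (F : Set (X ≃ₜ X)) : Prop :=
  ∃ δ > 0, ∀ x : X, ∀ r > 0, ∃ y ∈ ball x r, ∃ h ∈ SemigroupGen F,
    δ < dist (h x) (h y)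

def TopologicallyTransitive (F : Set (X ≃ₜ X)) : Prop :=
  ∀ U V : Set X, IsOpen U → IsOpen V → U.Nonempty → V.Nonempty →
    ∃ h ∈ SemigroupGen F, ((h : X → X) '' U ∩ V).Nonempty

def STransitive (F : Set (X ≃ₜ X)) : Prop :=
  ∀ U : Set X, IsOpen U → U.Nonempty →
    ∃ (ℓ : ℕ) (T : Fin ℓ → (X ≃ₜ X)), (∀ i, T i ∈ SemigroupGen F) ∧
      (univ : Set X) ⊆ closure (⋃ i, (T i : X → X) '' U)


lemma foldr_trans_append {X : Type*} [MetricSpace X] (l₁ l₂ : List (X ≃ₜ X)) :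
    (l₁ ++ l₂).foldr Homeomorph.trans (Homeomorph.refl X) =
      (l₁.foldr Homeomorph.trans (Homeomorph.refl X)).trans
        (l₂.foldr Homeomorph.trans (Homeomorph.refl X)) := by
  induction l₁ with
  | nil => exact Homeomorph.ext fun x => rfl
  | cons a l ih => rw [List.cons_append, List.foldr_cons, ih]; exact Homeomorph.ext fun x => rfl

lemma SemigroupGen.trans_mem {F : Set (X ≃ₜ X)} {g h : X ≃ₜ X}
    (hg : g ∈ SemigroupGen F) (hh : h ∈ SemigroupGen F) :
    g.trans h ∈ SemigroupGen F := by
  obtain ⟨l₁, hl₁ne, hl₁, rfl⟩ := hg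
  obtain ⟨l₂, hl₂ne, hl₂, rfl⟩ := hh
  refine ⟨l₁ ++ l₂, by simp [hl₁ne], ?_, (foldr_trans_append l₁ l₂).symm⟩
  intro f hf
  rcases List.mem_append.1 hf with h | h
  exacts [hl₁ f h, hl₂ f h]

/-- From S-transitivity: any point is an exact image (under some semigroup element)
of a point in the closure of any given nonempty open set. -/
lemma STransitive.exists_preimage_mem_closure {F : Set (X ≃ₜ X)}
    (hst : STransitive F) {U : Set X} (hU : IsOpen U) (hne : U.Nonempty) (p : X) :
    ∃ h ∈ SemigroupGen F, h.symm p ∈ closure U := by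
  obtain ⟨ℓ, T, hT, hcov⟩ := hst U hU hne
  have hp : p ∈ closure (⋃ i, (T i : X → X) '' U) := hcov (mem_univ p)
  have hsub : closure (⋃ i, (T i : X → X) '' U) ⊆ ⋃ i, closure ((T i : X → X) '' U) :=
    closure_minimal (iUnion_mono fun i => subset_closure)
      (isClosed_iUnion_of_finite fun i => isClosed_closure)
  obtain ⟨i, hpi⟩ := mem_iUnion.1 (hsub hp)
  rw [← Homeomorph.image_closure] at hpi
  obtain ⟨u, hu, hup⟩ := hpi
  refine ⟨T i, hT i, ?_⟩
  rw [← hup, Homeomorph.symm_apply_apply]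
  exact hu

/-- From S-transitivity: any nonempty open set contains a point whose image under some
semigroup element is arbitrarily close to any given point. -/
lemma STransitive.exists_image_close {F : Set (X ≃ₜ X)}
    (hst : STransitive F) {U : Set X} (hU : IsOpen U) (hne : U.Nonempty) (p : X)
    {δ : ℝ} (hδ : 0 < δ) :
    ∃ h ∈ SemigroupGen F, ∃ u ∈ U, dist (h u) p < δ := by
  obtain ⟨ℓ, T, hT, hcov⟩ := hst U hU hne
  have hp : p ∈ closure (⋃ i, (T i : X → X) '' U) := hcov (mem_univ p)
  obtain ⟨b, hb, hbd⟩ := Metric.mem_closure_iff.1 hp δ hδ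
  obtain ⟨i, hbi⟩ := mem_iUnion.1 hb
  obtain ⟨u, hu, rfl⟩ := hbi
  exact ⟨T i, hT i, u, hu, by rwa [dist_comm] at hbd⟩

/-- S-transitive but not minimal implies sensitive. -/
theorem S_transitive_not_minimal_sensitive
    {X : Type*} [MetricSpace X] [CompactSpace X] [Nontrivial X]
    (hniso : ∀ x : X, ¬ IsOpen ({x} : Set X))
    (F : Set (X ≃ₜ X)) (hF : F.Finite)
    (hst : STransitive F) (hnm : ¬ ForwardMinimal F) :
    Sensitive F := by
  -- Extract a point `x₀` whose forward orbit is not dense, and a ball `ball q ε`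
  -- disjoint from this orbit.
  rw [ForwardMinimal] at hnm
  push_neg at hnm
  obtain ⟨x₀, hx₀⟩ := hnm
  rw [Dense] at hx₀
  push_neg at hx₀
  obtain ⟨q, hq⟩ := hx₀
  obtain ⟨ε, hε, hball⟩ := Metric.isOpen_iff.1 isClosed_closure.isOpen_compl q hq
  have horb : ∀ p ∈ ForwardOrbit F x₀, ε ≤ dist p q := by
    intro p hp
    by_contra hlt
    push_neg at hlt
    exact hball (Metric.mem_ball.2 hlt) (subset_closure hp)
  refine ⟨ε / 4, by linarith, ?_⟩
  intro x r hr
  -- Step 1: find `y ∈ ball x r` with `h y = x₀` for some semigroup element `h`.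
  obtain ⟨h, hhF, hy⟩ := hst.exists_preimage_mem_closure (U := ball x (r / 2))
    isOpen_ball ⟨x, mem_ball_self (by linarith)⟩ x₀
  set y : X := h.symm x₀ with hy_def
  have hyball : y ∈ ball x r := by
    have : y ∈ closedBall x (r / 2) := closure_ball_subset_closedBall hy
    exact lt_of_le_of_lt (mem_closedBall.1 this) (by linarith)
  have hhy : h y = x₀ := h.apply_symm_apply x₀
  -- Step 2: find `z ∈ ball x r` and `g` in the semigroup with `g (h z)` close to `q`.
  have hWopen : IsOpen ((h : X → X) '' ball x r) := h.isOpenMap _ isOpen_ball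
  have hWne : ((h : X → X) '' ball x r).Nonempty := ⟨h y, y, hyball, rfl⟩
  obtain ⟨g, hgF, w, hw, hgw⟩ := hst.exists_image_close hWopen hWne q
    (show (0:ℝ) < ε / 4 by linarith)
  obtain ⟨z, hzball, rfl⟩ := hw
  -- The composed element separates points.
  set e : X ≃ₜ X := h.trans g with he_def
  have heF : e ∈ SemigroupGen F := SemigroupGen.trans_mem hhF hgF
  have hez : dist (e z) q < ε / 4 := hgw
  have hey : ε ≤ dist (e y) q := by
    refine horb _ ⟨g, hgF, ?_⟩
    show g (h y) = g x₀
    rw [hhy]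
  -- Conclude: one of `y`, `z` is separated from `x` by `e`.
  by_cases hxy : ε / 4 < dist (e x) (e y)
  · exact ⟨y, hyball, e, heF, hxy⟩
  · refine ⟨z, hzball, e, heF, ?_⟩
    push_neg at hxy
    have t1 := dist_triangle (e y) (e x) (e z)
    have t2 := dist_triangle (e y) (e z) q
    have : dist (e y) (e x) = dist (e x) (e y) := dist_comm _ _
    by_contra hxz
    push_neg at hxz
    linarith
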